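/- arXiv:1509.05502 — 3 statements merged into one kernel-verified Lean document; each statement's English description precedes it below -/
import Mathlib

section
/- Suppose 𝒴 = 𝒳. Let β' be the identity receiver policy, β'(x̂,y) = 1 if x̂ = y and 0 otherwise, and let α' ∈ A satisfy ξ(α',β') + ρ·ζ(α') ≤ ξ(α,β') + ρ·ζ(α) for all α ∈ A. Then (α',β') is a Nash equilibrium of the privacy game. -/
/-!
Against a receiver who deviates to `β`, the sender could have applied `β` to its own output and
played `postProcess β α'` against the identity receiver. That policy has the distortion
`ξ(α', β)`, and by the data-processing inequality (via the log-sum inequality) it leaks no more: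
`ζ(postProcess β α') ≤ ζ(α')`. Optimality of `α'` against the identity therefore forces
`ξ(α', id) ≤ ξ(α', β)`.
-/

open Finset

noncomputable section

variable {X W Y : Type*} [Fintype X] [Fintype W] [Fintype Y]

/-- The set `A` of sender policies: conditional distributions of `Y` given `(Z, W)`. -/
def senderSet (X W Y : Type*) [Fintype X] [Fintype W] [Fintype Y] :
    Set (Y × X × W → ℝ) :=
  {α | (∀ t, 0 ≤ α t ∧ α t ≤ 1) ∧ ∀ z w, ∑ y, α (y, z, w) = 1}

/-- The set `B` of receiver policies: conditional distributions of `X̂` given `Y`. -/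
def receiverSet (X Y : Type*) [Fintype X] [Fintype Y] : Set (X × Y → ℝ) :=
  {β | (∀ t, 0 ≤ β t ∧ β t ≤ 1) ∧ ∀ y, ∑ x, β (x, y) = 1}

/-- Expected distortion `ξ(α, β) = E{d(X, X̂)}`. -/
def xi (d : X × X → ℝ) (p : X × X × W → ℝ) (α : Y × X × W → ℝ) (β : X × Y → ℝ) : ℝ :=
  ∑ x, ∑ x', ∑ y, ∑ z, ∑ w, d (x, x') * β (x', y) * α (y, z, w) * p (x, z, w)

/-- Joint distribution `P_α(y, w)` of `(Y, W)` induced by the sender policy `α`. -/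
def Pyw (p : X × X × W → ℝ) (α : Y × X × W → ℝ) (y : Y) (w : W) : ℝ :=
  ∑ z, ∑ x, α (y, z, w) * p (x, z, w)

/-- Marginal distribution `P_α(y)` of `Y` induced by the sender policy `α`. -/
def Py (p : X × X × W → ℝ) (α : Y × X × W → ℝ) (y : Y) : ℝ :=
  ∑ w, Pyw p α y w

/-- Marginal distribution `q(w)` of the private information `W`. -/
def qW (p : X × X × W → ℝ) (w : W) : ℝ := ∑ z, ∑ x, p (x, z, w)

/-- Mutual information `ζ(α) = I(Y; W)`.  Summands with `P_α(y, w) = 0` automatically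
vanish since they are multiplied by `P_α(y, w) = 0`. -/
def zeta (p : X × X × W → ℝ) (α : Y × X × W → ℝ) : ℝ :=
  ∑ y, ∑ w, Pyw p α y w * Real.log (Pyw p α y w / (Py p α y * qW p w))

/-- Sender cost `U(α, β) = ξ(α, β) + ρ ζ(α)`. -/
def Ucost (d : X × X → ℝ) (p : X × X × W → ℝ) (ρ : ℝ)
    (α : Y × X × W → ℝ) (β : X × Y → ℝ) : ℝ :=
  xi d p α β + ρ * zeta p α

/-- Receiver cost `V(α, β) = ξ(α, β)`. -/
def Vcost (d : X × X → ℝ) (p : X × X × W → ℝ)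
    (α : Y × X × W → ℝ) (β : X × Y → ℝ) : ℝ :=
  xi d p α β

/-- Potential function `Ψ(α, β) = ξ(α, β) + ρ ζ(α)`. -/
def Psi (d : X × X → ℝ) (p : X × X × W → ℝ) (ρ : ℝ)
    (α : Y × X × W → ℝ) (β : X × Y → ℝ) : ℝ :=
  xi d p α β + ρ * zeta p α

/-- `(α, β)` is a Nash equilibrium of the privacy game. -/
def IsNash (d : X × X → ℝ) (p : X × X × W → ℝ) (ρ : ℝ)
    (α : Y × X × W → ℝ) (β : X × Y → ℝ) : Prop :=
  α ∈ senderSet X W Y ∧ β ∈ receiverSet X Y ∧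
    (∀ α' ∈ senderSet X W Y, Ucost d p ρ α β ≤ Ucost d p ρ α' β) ∧
    (∀ β' ∈ receiverSet X Y, Vcost d p α β ≤ Vcost d p α β')

/-- `(α, β)` is an `ε`-Nash equilibrium of the privacy game. -/
def IsEpsNash (d : X × X → ℝ) (p : X × X × W → ℝ) (ρ ε : ℝ)
    (α : Y × X × W → ℝ) (β : X × Y → ℝ) : Prop :=
  α ∈ senderSet X W Y ∧ β ∈ receiverSet X Y ∧
    (∀ α' ∈ senderSet X W Y, Ucost d p ρ α β ≤ Ucost d p ρ α' β + ε) ∧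
    (∀ β' ∈ receiverSet X Y, Vcost d p α β ≤ Vcost d p α β' + ε)

end

/-- Log-sum inequality. -/
theorem sum_mul_log_div_sum_le {ι : Type*} [Fintype ι] {a b : ι → ℝ}
    (ha : ∀ i, 0 ≤ a i) (hb : ∀ i, 0 ≤ b i) (hab : ∀ i, b i = 0 → a i = 0) :
    (∑ i, a i) * Real.log ((∑ i, a i) / ∑ i, b i) ≤ ∑ i, a i * Real.log (a i / b i) := by
  set B := ∑ i, b i
  rcases (sum_nonneg fun i _ => hb i : 0 ≤ B).eq_or_lt with hB | hB
  · have hb0 : ∀ i, b i = 0 := fun i =>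
      (sum_eq_zero_iff_of_nonneg fun i _ => hb i).mp hB.symm i (mem_univ i)
    simp [hab _ (hb0 _)]
  have hB0 : B ≠ 0 := hB.ne'
  -- Jensen for `x ↦ x log x` with weights `b i / B` at the points `a i / b i`
  have hweight : ∀ i, b i / B * (a i / b i) = a i / B := fun i => by
    rcases eq_or_ne (b i) 0 with h | h
    · simp [h, hab i h]
    · field_simp
  have jensen := Real.convexOn_mul_log.map_sum_le (t := univ) (w := fun i => b i / B)
    (p := fun i => a i / b i) (fun i _ => div_nonneg (hb i) hB.le)
    (by rw [← sum_div, div_self hB0]) (fun i _ => div_nonneg (ha i) (hb i))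
  simp only [smul_eq_mul, ← mul_assoc, hweight, ← sum_div] at jensen
  calc (∑ i, a i) * Real.log ((∑ i, a i) / B)
      = B * ((∑ i, a i) / B * Real.log ((∑ i, a i) / B)) := by field_simp
    _ ≤ B * ∑ i, a i / B * Real.log (a i / b i) := mul_le_mul_of_nonneg_left jensen hB.le
    _ = ∑ i, a i * Real.log (a i / b i) := by
      rw [mul_sum]; exact sum_congr rfl fun i _ => by field_simp

theorem mul_log_mul_div_mul_left (a b c : ℝ) :
    c * a * Real.log (c * a / (c * b)) = c * (a * Real.log (a / b)) := by
  rcases eq_or_ne c 0 with rfl | hc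
  · simp
  · rw [mul_div_mul_left _ _ hc, mul_assoc]

section Marginals

variable {X W Y : Type*} [Fintype X]

theorem Pyw_nonneg {p : X × X × W → ℝ} (hp : ∀ t, 0 ≤ p t) {α : Y × X × W → ℝ}
    (hα : ∀ t, 0 ≤ α t) (y : Y) (w : W) : 0 ≤ Pyw p α y w :=
  sum_nonneg fun _ _ => sum_nonneg fun _ _ => mul_nonneg (hα _) (hp _)

theorem Pyw_le_qW {p : X × X × W → ℝ} (hp : ∀ t, 0 ≤ p t) {α : Y × X × W → ℝ}
    (hα : ∀ t, α t ≤ 1) (y : Y) (w : W) : Pyw p α y w ≤ qW p w :=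
  sum_le_sum fun _ _ => sum_le_sum fun _ _ => mul_le_of_le_one_left (hp _) (hα _)

theorem Pyw_eq_zero_of_Py_mul_qW_eq_zero [Fintype W] [Fintype Y] {p : X × X × W → ℝ}
    (hp : ∀ t, 0 ≤ p t) {α : Y × X × W → ℝ} (hα : α ∈ senderSet X W Y) {y : Y} {w : W}
    (h : Py p α y * qW p w = 0) : Pyw p α y w = 0 := by
  have hPyw := Pyw_nonneg hp (fun t => (hα.1 t).1)
  rcases mul_eq_zero.mp h with hPy | hq
  · exact (sum_eq_zero_iff_of_nonneg fun w _ => hPyw y w).mp hPy w (mem_univ w)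
  · exact le_antisymm (hq ▸ Pyw_le_qW hp (fun t => (hα.1 t).2) y w) (hPyw y w)

end Marginals

section PostProcess

variable {X W Y X' : Type*} [Fintype X] [Fintype Y]

noncomputable def postProcess (β : X' × Y → ℝ) (α : Y × X × W → ℝ) : X' × X × W → ℝ :=
  fun t => ∑ y, β (t.1, y) * α (y, t.2.1, t.2.2)

theorem postProcess_mem_senderSet [Fintype W] [Fintype X'] {α : Y × X × W → ℝ}
    {β : X' × Y → ℝ} (hα : α ∈ senderSet X W Y) (hβ : β ∈ receiverSet X' Y) :
    postProcess β α ∈ senderSet X W X' := by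
  obtain ⟨hα01, hα1⟩ := hα
  obtain ⟨hβ01, hβ1⟩ := hβ
  have hnonneg : ∀ t, 0 ≤ postProcess β α t := fun t =>
    sum_nonneg fun y _ => mul_nonneg (hβ01 _).1 (hα01 _).1
  have hsum : ∀ z w, ∑ x', postProcess β α (x', z, w) = 1 := fun z w => by
    simp only [postProcess]
    rw [sum_comm]
    simp only [← sum_mul, hβ1, one_mul, hα1]
  refine ⟨fun t => ⟨hnonneg t, ?_⟩, hsum⟩
  rw [← hsum t.2.1 t.2.2]
  exact single_le_sum (fun x' _ => hnonneg (x', t.2.1, t.2.2)) (mem_univ t.1)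

theorem Pyw_postProcess (p : X × X × W → ℝ) (α : Y × X × W → ℝ) (β : X' × Y → ℝ)
    (x' : X') (w : W) :
    Pyw p (postProcess β α) x' w = ∑ y, β (x', y) * Pyw p α y w := by
  simp only [Pyw, postProcess, sum_mul, mul_sum, mul_assoc]
  exact (sum_congr rfl fun z _ => sum_comm).trans sum_comm

theorem Py_postProcess [Fintype W] (p : X × X × W → ℝ) (α : Y × X × W → ℝ)
    (β : X' × Y → ℝ) (x' : X') :
    Py p (postProcess β α) x' = ∑ y, β (x', y) * Py p α y := by
  simp only [Py, Pyw_postProcess, mul_sum]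
  exact sum_comm

/-- Data-processing inequality for `I(Y; W)`. -/
theorem zeta_postProcess_le [Fintype W] [Fintype X'] {p : X × X × W → ℝ} (hp : ∀ t, 0 ≤ p t)
    {α : Y × X × W → ℝ} {β : X' × Y → ℝ} (hα : α ∈ senderSet X W Y)
    (hβ : β ∈ receiverSet X' Y) :
    zeta p (postProcess β α) ≤ zeta p α := by
  obtain ⟨hβ01, hβ1⟩ := hβ
  set L : Y → W → ℝ := fun y w => Pyw p α y w * Real.log (Pyw p α y w / (Py p α y * qW p w))
  have hterm : ∀ x' w, Pyw p (postProcess β α) x' w *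
      Real.log (Pyw p (postProcess β α) x' w / (Py p (postProcess β α) x' * qW p w)) ≤
      ∑ y, β (x', y) * L y w := by
    intro x' w
    have hPyw := Pyw_nonneg hp (fun t => (hα.1 t).1)
    have hlogsum := sum_mul_log_div_sum_le (a := fun y => β (x', y) * Pyw p α y w)
      (b := fun y => β (x', y) * (Py p α y * qW p w))
      (fun y => mul_nonneg (hβ01 _).1 (hPyw y w))
      (fun y => mul_nonneg (hβ01 _).1 (mul_nonneg (sum_nonneg fun w _ => hPyw y w)
        (sum_nonneg fun _ _ => sum_nonneg fun _ _ => hp _)))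
      (fun y h => by
        rcases mul_eq_zero.mp h with h | h
        · rw [h, zero_mul]
        · rw [Pyw_eq_zero_of_Py_mul_qW_eq_zero hp hα h, mul_zero])
    simp only [mul_log_mul_div_mul_left] at hlogsum
    have hden : Py p (postProcess β α) x' * qW p w = ∑ y, β (x', y) * (Py p α y * qW p w) := by
      rw [Py_postProcess, sum_mul]
      exact sum_congr rfl fun y _ => mul_assoc _ _ _
    rwa [hden, Pyw_postProcess]
  calc zeta p (postProcess β α) ≤ ∑ x', ∑ w, ∑ y, β (x', y) * L y w :=
        sum_le_sum fun x' _ => sum_le_sum fun w _ => hterm x' w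
    _ = ∑ y, (∑ x', β (x', y)) * ∑ w, L y w := by
        simp only [sum_mul, mul_sum]
        exact sum_comm.trans ((sum_congr rfl fun w _ => sum_comm).trans sum_comm)
    _ = zeta p α := by simp only [hβ1, one_mul, L, zeta]

end PostProcess

section IdentityReceiver

variable {X : Type*} [DecidableEq X]

def idReceiver : X × X → ℝ := fun t => if t.1 = t.2 then 1 else 0

theorem idReceiver_mem_receiverSet [Fintype X] : idReceiver ∈ receiverSet X X := by
  refine ⟨fun t => ?_, fun y => ?_⟩
  · unfold idReceiver; split <;> norm_num
  · simp [idReceiver]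

theorem xi_postProcess_idReceiver {W Y : Type*} [Fintype X] [Fintype W] [Fintype Y]
    (d : X × X → ℝ) (p : X × X × W → ℝ) (α : Y × X × W → ℝ) (β : X × Y → ℝ) :
    xi d p (postProcess β α) idReceiver = xi d p α β := by
  unfold xi
  refine sum_congr rfl fun x _ => sum_congr rfl fun x' _ => ?_
  rw [sum_eq_single x' (fun y' _ hy' => by simp [idReceiver, Ne.symm hy']) (by simp)]
  simp only [idReceiver, postProcess, if_true, mul_one, mul_sum, sum_mul, mul_assoc]
  exact (sum_congr rfl fun z _ => sum_comm).trans sum_comm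

end IdentityReceiver

variable {X W : Type*} [Fintype X] [Fintype W]

theorem identity_receiver_equilibrium_general [DecidableEq X]
    (p : X × X × W → ℝ) (hp0 : ∀ t, 0 ≤ p t)
    (d : X × X → ℝ)
    (ρ : ℝ) (hρ : 0 ≤ ρ)
    (β' : X × X → ℝ) (hβ' : ∀ t, β' t = if t.1 = t.2 then 1 else 0)
    (α' : X × X × W → ℝ) (hα'A : α' ∈ senderSet X W X)
    (hα'min : ∀ α ∈ senderSet X W X,
      xi d p α' β' + ρ * zeta p α' ≤ xi d p α β' + ρ * zeta p α) :
    IsNash d p ρ α' β' := by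
  obtain rfl : β' = idReceiver := funext hβ'
  refine ⟨hα'A, idReceiver_mem_receiverSet, hα'min, fun β hβ => ?_⟩
  have hmin := hα'min _ (postProcess_mem_senderSet hα'A hβ)
  rw [xi_postProcess_idReceiver] at hmin
  have hzeta := mul_le_mul_of_nonneg_left (zeta_postProcess_le hp0 hα'A hβ) hρ
  change xi d p α' idReceiver ≤ xi d p α' β
  linarith

/-- with `𝒴 = 𝒳`, the identity receiver policy `β'` together with any
sender policy `α'` minimizing `ξ(·, β') + ρ ζ(·)` over `A` is a Nash equilibrium. -/
theorem identity_receiver_equilibrium [Nonempty X] [Nonempty W] [DecidableEq X]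
    (p : X × X × W → ℝ) (hp0 : ∀ t, 0 ≤ p t)
    (hp1 : ∑ x, ∑ z, ∑ w, p (x, z, w) = 1)
    (d : X × X → ℝ) (hd : ∀ t, 0 ≤ d t)
    (ρ : ℝ) (hρ : 0 ≤ ρ)
    (β' : X × X → ℝ) (hβ' : ∀ t, β' t = if t.1 = t.2 then 1 else 0)
    (α' : X × X × W → ℝ) (hα'A : α' ∈ senderSet X W X)
    (hα'min : ∀ α ∈ senderSet X W X,
      xi d p α' β' + ρ * zeta p α' ≤ xi d p α β' + ρ * zeta p α) :
    IsNash d p ρ α' β' :=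
  identity_receiver_equilibrium_general p hp0 d ρ hρ β' hβ' α' hα'A hα'min
end

section
/- Let ε > 0 and let (α^k,β^k)_{k≥0} be an ε-thresholded best-response trajectory. Then the potential is nonincreasing along the trajectory, and for every k ≥ 0, if (α^k,β^k) ∉ 𝒩_ε then Ψ(α^{k+2},β^{k+2}) < Ψ(α^k,β^k) − ε; that is, within every two consecutive iterations at a non-ε-Nash state the potential strictly decreases by more than ε. -/
open Finset

noncomputable section

variable {X W Y : Type*} [Fintype X] [Fintype W] [Fintype Y]

/-- An `ε`-thresholded best-response trajectory (Algorithm 2): at odd steps the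
receiver switches to a best response only if it improves her cost by more than `ε`;
at even steps `k ≥ 2` the sender does likewise. -/
def IsThreshBRTraj (d : X × X → ℝ) (p : X × X × W → ℝ) (ρ ε : ℝ)
    (αs : ℕ → Y × X × W → ℝ) (βs : ℕ → X × Y → ℝ) : Prop :=
  αs 0 ∈ senderSet X W Y ∧ βs 0 ∈ receiverSet X Y ∧
    (∀ k, 1 ≤ k → Odd k →
      αs k = αs (k - 1) ∧
      ∃ β' ∈ receiverSet X Y,
        (∀ β ∈ receiverSet X Y,
          Vcost d p (αs (k - 1)) β' ≤ Vcost d p (αs (k - 1)) β) ∧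
        (ε < Vcost d p (αs (k - 1)) (βs (k - 1)) - Vcost d p (αs (k - 1)) β' →
          βs k = β') ∧
        (¬ (ε < Vcost d p (αs (k - 1)) (βs (k - 1)) - Vcost d p (αs (k - 1)) β') →
          βs k = βs (k - 1))) ∧
    (∀ k, 2 ≤ k → Even k →
      βs k = βs (k - 1) ∧
      ∃ α' ∈ senderSet X W Y,
        (∀ α ∈ senderSet X W Y,
          Ucost d p ρ α' (βs (k - 1)) ≤ Ucost d p ρ α (βs (k - 1))) ∧
        (ε < Ucost d p ρ (αs (k - 1)) (βs (k - 1)) - Ucost d p ρ α' (βs (k - 1)) →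
          αs k = α') ∧
        (¬ (ε < Ucost d p ρ (αs (k - 1)) (βs (k - 1)) - Ucost d p ρ α' (βs (k - 1))) →
          αs k = αs (k - 1)))

/-! The game is an exact potential game: `Ψ` coincides with the sender's cost `U`, and it
differs from the receiver's cost `V` by `ρ ζ(α)`, which does not depend on `β`. So every
accepted move lowers `Ψ` by the mover's gain, which exceeds `ε`. A rejected move leaves the
state unchanged and certifies that the mover is already `ε`-best-responding; two rejections
in a row therefore certify an `ε`-Nash equilibrium. -/

section ThresholdStep

variable {S : Type*} {c : S → ℝ} {ε : ℝ} {A : Set S} {s s' best : S}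

theorem threshold_step_mem (hs : s ∈ A) (hbest : best ∈ A)
    (hacc : ε < c s - c best → s' = best) (hrej : ¬ ε < c s - c best → s' = s) : s' ∈ A := by
  by_cases h : ε < c s - c best
  · exact hacc h ▸ hbest
  · exact hrej h ▸ hs

theorem threshold_step_descends_or_stays (hmin : ∀ t ∈ A, c best ≤ c t)
    (hacc : ε < c s - c best → s' = best) (hrej : ¬ ε < c s - c best → s' = s) :
    c s' < c s - ε ∨ (s' = s ∧ ∀ t ∈ A, c s ≤ c t + ε) := by
  by_cases h : ε < c s - c best
  · left
    rw [hacc h]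
    linarith
  · refine Or.inr ⟨hrej h, fun t ht => ?_⟩
    linarith [hmin t ht]

end ThresholdStep

section PotentialGame

variable {d : X × X → ℝ} {p : X × X × W → ℝ} {ρ ε : ℝ}

def IsSenderEpsBestResponse (d : X × X → ℝ) (p : X × X × W → ℝ) (ρ ε : ℝ)
    (α : Y × X × W → ℝ) (β : X × Y → ℝ) : Prop :=
  ∀ α' ∈ senderSet X W Y, Ucost d p ρ α β ≤ Ucost d p ρ α' β + ε

def IsReceiverEpsBestResponse (d : X × X → ℝ) (p : X × X × W → ℝ) (ε : ℝ)
    (α : Y × X × W → ℝ) (β : X × Y → ℝ) : Prop :=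
  ∀ β' ∈ receiverSet X Y, Vcost d p α β ≤ Vcost d p α β' + ε

theorem Psi_eq_Ucost (α : Y × X × W → ℝ) (β : X × Y → ℝ) :
    Psi d p ρ α β = Ucost d p ρ α β :=
  rfl

theorem Psi_sub_Psi_eq_Vcost_sub (α : Y × X × W → ℝ) (β β' : X × Y → ℝ) :
    Psi d p ρ α β - Psi d p ρ α β' = Vcost d p α β - Vcost d p α β' := by
  simp only [Psi, Vcost]
  ring

namespace IsThreshBRTraj

variable {αs : ℕ → Y × X × W → ℝ} {βs : ℕ → X × Y → ℝ}

theorem mem (h : IsThreshBRTraj d p ρ ε αs βs) (k : ℕ) :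
    αs k ∈ senderSet X W Y ∧ βs k ∈ receiverSet X Y := by
  obtain ⟨hα₀, hβ₀, hodd, heven⟩ := h
  induction k with
  | zero => exact ⟨hα₀, hβ₀⟩
  | succ k ih =>
    rcases Nat.even_or_odd (k + 1) with hk | hk
    · obtain ⟨hβ, α', hα', -, hacc, hrej⟩ := heven (k + 1) (by grind) hk
      simp only [add_tsub_cancel_right] at hβ hacc hrej
      exact ⟨threshold_step_mem (c := (Ucost d p ρ · (βs k))) ih.1 hα' hacc hrej, hβ ▸ ih.2⟩
    · obtain ⟨hα, β', hβ', -, hacc, hrej⟩ := hodd (k + 1) (by omega) hk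
      simp only [add_tsub_cancel_right] at hα hacc hrej
      exact ⟨hα ▸ ih.1, threshold_step_mem (c := Vcost d p (αs k)) ih.2 hβ' hacc hrej⟩

theorem receiver_step (h : IsThreshBRTraj d p ρ ε αs βs) {k : ℕ} (hk : Even k) :
    αs (k + 1) = αs k ∧
      (Psi d p ρ (αs (k + 1)) (βs (k + 1)) < Psi d p ρ (αs k) (βs k) - ε ∨
        (βs (k + 1) = βs k ∧ IsReceiverEpsBestResponse d p ε (αs k) (βs k))) := by
  obtain ⟨hα, β', -, hmin, hacc, hrej⟩ := h.2.2.1 (k + 1) (by omega) hk.add_one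
  simp only [add_tsub_cancel_right] at hα hmin hacc hrej
  refine ⟨hα, ?_⟩
  rcases threshold_step_descends_or_stays hmin hacc hrej with hdesc | hstay
  · left
    rw [hα]
    linarith [Psi_sub_Psi_eq_Vcost_sub (d := d) (p := p) (ρ := ρ) (αs k) (βs k) (βs (k + 1))]
  · exact Or.inr hstay

theorem sender_step (h : IsThreshBRTraj d p ρ ε αs βs) {k : ℕ} (hk : Odd k) :
    βs (k + 1) = βs k ∧
      (Psi d p ρ (αs (k + 1)) (βs (k + 1)) < Psi d p ρ (αs k) (βs k) - ε ∨
        (αs (k + 1) = αs k ∧ IsSenderEpsBestResponse d p ρ ε (αs k) (βs k))) := by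
  obtain ⟨hβ, α', -, hmin, hacc, hrej⟩ := h.2.2.2 (k + 1) (by grind) hk.add_one
  simp only [add_tsub_cancel_right] at hβ hmin hacc hrej
  refine ⟨hβ, ?_⟩
  rw [hβ, Psi_eq_Ucost, Psi_eq_Ucost]
  exact threshold_step_descends_or_stays (c := (Ucost d p ρ · (βs k))) hmin hacc hrej

theorem descends_or_stays (h : IsThreshBRTraj d p ρ ε αs βs) (k : ℕ) :
    Psi d p ρ (αs (k + 1)) (βs (k + 1)) < Psi d p ρ (αs k) (βs k) - ε ∨
      (αs (k + 1) = αs k ∧ βs (k + 1) = βs k ∧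
        (Even k → IsReceiverEpsBestResponse d p ε (αs k) (βs k)) ∧
        (Odd k → IsSenderEpsBestResponse d p ρ ε (αs k) (βs k))) := by
  rcases Nat.even_or_odd k with hk | hk
  · obtain ⟨hα, hdesc | ⟨hβ, hbr⟩⟩ := h.receiver_step hk
    · exact Or.inl hdesc
    · exact Or.inr ⟨hα, hβ, fun _ => hbr, fun hk' => absurd hk' (Nat.not_odd_iff_even.2 hk)⟩
  · obtain ⟨hβ, hdesc | ⟨hα, hbr⟩⟩ := h.sender_step hk
    · exact Or.inl hdesc
    · exact Or.inr ⟨hα, hβ, fun hk' => absurd hk (Nat.not_odd_iff_even.2 hk'), fun _ => hbr⟩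

theorem Psi_succ_le (h : IsThreshBRTraj d p ρ ε αs βs) (hε : 0 ≤ ε) (k : ℕ) :
    Psi d p ρ (αs (k + 1)) (βs (k + 1)) ≤ Psi d p ρ (αs k) (βs k) := by
  rcases h.descends_or_stays k with hdesc | ⟨hα, hβ, -⟩
  · linarith
  · rw [hα, hβ]

theorem isEpsNash_of_stays_twice (h : IsThreshBRTraj d p ρ ε αs βs) {k : ℕ}
    (h₀ : (Even k → IsReceiverEpsBestResponse d p ε (αs k) (βs k)) ∧
      (Odd k → IsSenderEpsBestResponse d p ρ ε (αs k) (βs k)))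
    (h₁ : (Even (k + 1) → IsReceiverEpsBestResponse d p ε (αs k) (βs k)) ∧
      (Odd (k + 1) → IsSenderEpsBestResponse d p ρ ε (αs k) (βs k))) :
    IsEpsNash d p ρ ε (αs k) (βs k) := by
  refine ⟨(h.mem k).1, (h.mem k).2, ?_⟩
  rcases Nat.even_or_odd k with hk | hk
  · exact ⟨h₁.2 hk.add_one, h₀.1 hk⟩
  · exact ⟨h₀.2 hk, h₁.1 hk.add_one⟩

theorem Psi_add_two_lt_of_not_isEpsNash (h : IsThreshBRTraj d p ρ ε αs βs) (hε : 0 ≤ ε)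
    {k : ℕ} (hk : ¬ IsEpsNash d p ρ ε (αs k) (βs k)) :
    Psi d p ρ (αs (k + 2)) (βs (k + 2)) < Psi d p ρ (αs k) (βs k) - ε := by
  have hmono := h.Psi_succ_le hε (k + 1)
  rcases h.descends_or_stays k with hdesc | ⟨hα₁, hβ₁, hbr₀⟩
  · linarith
  rcases h.descends_or_stays (k + 1) with hdesc | ⟨-, -, hbr₁⟩
  · rwa [hα₁, hβ₁] at hdesc
  rw [hα₁, hβ₁] at hbr₁
  exact absurd (h.isEpsNash_of_stays_twice hbr₀ hbr₁) hk

end IsThreshBRTraj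

end PotentialGame

theorem thresholded_potential_decrease_general
    (p : X × X × W → ℝ)
    (d : X × X → ℝ)
    (ρ : ℝ) (ε : ℝ) (hε : 0 < ε)
    (αs : ℕ → Y × X × W → ℝ) (βs : ℕ → X × Y → ℝ)
    (htraj : IsThreshBRTraj d p ρ ε αs βs) :
    (∀ k, 1 ≤ k → Psi d p ρ (αs k) (βs k) ≤ Psi d p ρ (αs (k - 1)) (βs (k - 1))) ∧
    (∀ k, ¬ IsEpsNash d p ρ ε (αs k) (βs k) →
      Psi d p ρ (αs (k + 2)) (βs (k + 2)) < Psi d p ρ (αs k) (βs k) - ε) := by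
  refine ⟨fun k hk => ?_, fun k => htraj.Psi_add_two_lt_of_not_isEpsNash hε.le⟩
  obtain ⟨j, rfl⟩ := Nat.exists_eq_add_of_le' hk
  exact htraj.Psi_succ_le hε.le j

/-- along an `ε`-thresholded best-response trajectory the potential is
nonincreasing, and from any state that is not an `ε`-Nash equilibrium the potential
strictly decreases by more than `ε` within two iterations. -/
theorem thresholded_potential_decrease [Nonempty X] [Nonempty W] [Nonempty Y]
    (p : X × X × W → ℝ) (hp0 : ∀ t, 0 ≤ p t)
    (hp1 : ∑ x, ∑ z, ∑ w, p (x, z, w) = 1)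
    (d : X × X → ℝ) (hd : ∀ t, 0 ≤ d t)
    (ρ : ℝ) (hρ : 0 ≤ ρ) (ε : ℝ) (hε : 0 < ε)
    (αs : ℕ → Y × X × W → ℝ) (βs : ℕ → X × Y → ℝ)
    (htraj : IsThreshBRTraj d p ρ ε αs βs) :
    (∀ k, 1 ≤ k → Psi d p ρ (αs k) (βs k) ≤ Psi d p ρ (αs (k - 1)) (βs (k - 1))) ∧
    (∀ k, ¬ IsEpsNash d p ρ ε (αs k) (βs k) →
      Psi d p ρ (αs (k + 2)) (βs (k + 2)) < Psi d p ρ (αs k) (βs k) - ε) :=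
  thresholded_potential_decrease_general p d ρ ε hε αs βs htraj
end
end

section
/- Let Sβ : ∏_i A'_i → B' be a map with V(a,Sβ(a)) ≤ V(a,β̄) for all a ∈ ∏_i A'_i and β̄ ∈ B', and for each j ∈ {1,…,n} let S_j : (∏_i A'_i) × B' → A'_j be a map with U_j(S_j(a,β),(a_i)_{i≠j},β) ≤ U_j(ᾱ^(j),(a_i)_{i≠j},β) for all (a,β) and ᾱ^(j) ∈ A'_j. Fix an initial state s^0 ∈ ∏_i A'_i × B', and for ω : ℕ → {0,1,…,n} define s^k(ω) recursively for k ≥ 1: if ω(k) = 0 then s^k(ω) is s^{k-1}(ω) with its receiver component replaced by Sβ applied to the sender components of s^{k-1}(ω); if ω(k) = j ∈ {1,…,n} then s^k(ω) is s^{k-1}(ω) with its j-th sender component replaced by S_j applied to s^{k-1}(ω). Let μ be the infinite product over ℕ of the uniform probability measure on {0,1,…,n}. Then for every ε > 0, lim_{k→∞} μ{ω : s^k(ω) ∈ 𝒩'_ε} = 1. -/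
/-!
`Ψ' = ξ' + ρ ∑ᵢ ζ'ᵢ` is an exact potential of the game: a unilateral deviation changes the
deviating player's cost and `Ψ'` by the same amount. Hence best responses never increase `Ψ'`,
and in a profile that is not an `ε`-equilibrium the best response of some player lowers `Ψ'` by
at least `ε`. As `Ψ' ≥ 0` (each `ζ'ᵢ` is a mutual information), such drops happen at most
`⌊Ψ'(s⁰) / ε⌋` times along any trajectory. Whenever `s^k` is not an `ε`-equilibrium, the player
whose best response causes a drop is drawn at step `k + 1` with probability `1 / (n + 1)` given
the first `k` draws, so `∑ₖ μ(s^k ∉ 𝒩'_ε) ≤ (n + 1) ⌊Ψ'(s⁰) / ε⌋ < ∞`.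
-/

open Finset

noncomputable section

variable {n : ℕ} {X : Type*} {Y W : Fin n → Type*}
  [Fintype X] [∀ i, Fintype (Y i)] [∀ i, Fintype (W i)]

/-- The set `A'_i` of policies for sender `i`: conditional distributions of
`Y_i` given `(Z_i, W_i)`. -/
def senderSet' (X : Type*) [Fintype X] {Y W : Fin n → Type*}
    [∀ i, Fintype (Y i)] [∀ i, Fintype (W i)] (i : Fin n) :
    Set (Y i × X × W i → ℝ) :=
  {α | (∀ t, 0 ≤ α t ∧ α t ≤ 1) ∧ ∀ z w, ∑ y, α (y, z, w) = 1}

/-- The set `B'` of receiver policies: conditional distributions of `X̂` given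
`(Y_1, …, Y_n)`. -/
def receiverSet' (X : Type*) [Fintype X] (Y : Fin n → Type*) [∀ i, Fintype (Y i)] :
    Set (X × (∀ i, Y i) → ℝ) :=
  {β | (∀ t, 0 ≤ β t ∧ β t ≤ 1) ∧ ∀ ys, ∑ x, β (x, ys) = 1}

/-- Expected distortion `ξ'(β, (α⁽ⁱ⁾)ᵢ) = E{d(X, X̂)}` in the multi-sender game. -/
def xi' (d : X × X → ℝ) (p : X × (Fin n → X) × (∀ i, W i) → ℝ)
    (a : ∀ i, Y i × X × W i → ℝ) (β : X × (∀ i, Y i) → ℝ) : ℝ :=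
  ∑ x, ∑ x', ∑ ys : ∀ i, Y i, ∑ zs : Fin n → X, ∑ ws : ∀ i, W i,
    d (x, x') * β (x', ys) * (∏ i, a i (ys i, zs i, ws i)) * p (x, zs, ws)

open Classical in
/-- The `(Z_i, W_i)`-marginal `m_i(z_i, w_i)` of `p`. -/
def margZW (p : X × (Fin n → X) × (∀ i, W i) → ℝ) (i : Fin n) (zi : X) (wi : W i) : ℝ :=
  ∑ x, ∑ zs : Fin n → X, ∑ ws : ∀ j, W j,
    if zs i = zi ∧ ws i = wi then p (x, zs, ws) else 0

open Classical in
/-- The `W_i`-marginal `q_i(w_i)` of `p`. -/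
def margW (p : X × (Fin n → X) × (∀ i, W i) → ℝ) (i : Fin n) (wi : W i) : ℝ :=
  ∑ x, ∑ zs : Fin n → X, ∑ ws : ∀ j, W j,
    if ws i = wi then p (x, zs, ws) else 0

/-- Joint distribution `P_i(y_i, w_i)` of `(Y_i, W_i)` induced by sender `i`'s policy. -/
def Pyw' (p : X × (Fin n → X) × (∀ i, W i) → ℝ) (i : Fin n)
    (α : Y i × X × W i → ℝ) (yi : Y i) (wi : W i) : ℝ :=
  ∑ zi, α (yi, zi, wi) * margZW p i zi wi

/-- Marginal distribution `P_i(y_i)` of `Y_i` induced by sender `i`'s policy. -/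
def Py' (p : X × (Fin n → X) × (∀ i, W i) → ℝ) (i : Fin n)
    (α : Y i × X × W i → ℝ) (yi : Y i) : ℝ :=
  ∑ wi, Pyw' p i α yi wi

/-- Mutual information `ζ'_i(α⁽ⁱ⁾) = I(Y_i; W_i)`.  Summands with `P_i(y_i, w_i) = 0`
automatically vanish since they are multiplied by `P_i(y_i, w_i) = 0`. -/
def zeta' (p : X × (Fin n → X) × (∀ i, W i) → ℝ) (i : Fin n)
    (α : Y i × X × W i → ℝ) : ℝ :=
  ∑ yi, ∑ wi, Pyw' p i α yi wi *
    Real.log (Pyw' p i α yi wi / (Py' p i α yi * margW p i wi))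

/-- Cost `U_j((α⁽ⁱ⁾)ᵢ, β) = ξ'(β, (α⁽ⁱ⁾)ᵢ) + ρ ζ'_j(α⁽ʲ⁾)` of sender `j`. -/
def Ucost' (d : X × X → ℝ) (p : X × (Fin n → X) × (∀ i, W i) → ℝ) (ρ : ℝ) (j : Fin n)
    (a : ∀ i, Y i × X × W i → ℝ) (β : X × (∀ i, Y i) → ℝ) : ℝ :=
  xi' d p a β + ρ * zeta' p j (a j)

/-- Receiver cost `V((α⁽ⁱ⁾)ᵢ, β) = ξ'(β, (α⁽ⁱ⁾)ᵢ)`. -/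
def Vcost' (d : X × X → ℝ) (p : X × (Fin n → X) × (∀ i, W i) → ℝ)
    (a : ∀ i, Y i × X × W i → ℝ) (β : X × (∀ i, Y i) → ℝ) : ℝ :=
  xi' d p a β

/-- Potential function `Ψ'((α⁽ⁱ⁾)ᵢ, β) = ξ'(β, (α⁽ⁱ⁾)ᵢ) + ρ ∑ᵢ ζ'_i(α⁽ⁱ⁾)`. -/
def Psi' (d : X × X → ℝ) (p : X × (Fin n → X) × (∀ i, W i) → ℝ) (ρ : ℝ)
    (a : ∀ i, Y i × X × W i → ℝ) (β : X × (∀ i, Y i) → ℝ) : ℝ :=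
  xi' d p a β + ρ * ∑ i, zeta' p i (a i)

/-- `((α⁽ⁱ⁾)ᵢ, β)` is a Nash equilibrium of the multi-sender privacy game. -/
def IsNash' (d : X × X → ℝ) (p : X × (Fin n → X) × (∀ i, W i) → ℝ) (ρ : ℝ)
    (a : ∀ i, Y i × X × W i → ℝ) (β : X × (∀ i, Y i) → ℝ) : Prop :=
  (∀ i, a i ∈ senderSet' X i) ∧ β ∈ receiverSet' X Y ∧
    (∀ j, ∀ ᾱ ∈ senderSet' X j,
      Ucost' d p ρ j a β ≤ Ucost' d p ρ j (Function.update a j ᾱ) β) ∧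
    (∀ β' ∈ receiverSet' X Y, Vcost' d p a β ≤ Vcost' d p a β')

/-- `((α⁽ⁱ⁾)ᵢ, β)` is an `ε`-Nash equilibrium of the multi-sender privacy game. -/
def IsEpsNash' (d : X × X → ℝ) (p : X × (Fin n → X) × (∀ i, W i) → ℝ) (ρ ε : ℝ)
    (a : ∀ i, Y i × X × W i → ℝ) (β : X × (∀ i, Y i) → ℝ) : Prop :=
  (∀ i, a i ∈ senderSet' X i) ∧ β ∈ receiverSet' X Y ∧
    (∀ j, ∀ ᾱ ∈ senderSet' X j,
      Ucost' d p ρ j a β ≤ Ucost' d p ρ j (Function.update a j ᾱ) β + ε) ∧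
    (∀ β' ∈ receiverSet' X Y, Vcost' d p a β ≤ Vcost' d p a β' + ε)

open MeasureTheory Filter ENNReal Topology

theorem DependsOn.preimage {ι β : Type*} {α : ι → Type*} {f : (∀ i, α i) → β} {s : Set ι}
    (hf : DependsOn f s) (T : Set β) : DependsOn (· ∈ f ⁻¹' T) s :=
  fun _ _ h => by simp only [Set.mem_preimage, hf h]

theorem dependsOn_range_of_eq_succ {α S : Type*} {x : (ℕ → α) → ℕ → S} {x₀ : S}
    {F : α → S → S} (h0 : ∀ ω, x ω 0 = x₀) (hS : ∀ ω k, x ω (k + 1) = F (ω (k + 1)) (x ω k))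
    (k : ℕ) : DependsOn (x · k) (range (k + 1)) := by
  induction k with
  | zero => exact fun ω ω' _ => (h0 ω).trans (h0 ω').symm
  | succ k ih =>
    intro ω ω' hagree
    have hprefix : ∀ i ∈ (range (k + 1) : Set ℕ), ω i = ω' i := fun i hi =>
      hagree i (by simp only [coe_range, Set.mem_Iio] at hi ⊢; omega)
    show x ω (k + 1) = x ω' (k + 1)
    rw [hS, hS, show x ω k = x ω' k from ih hprefix, hagree (k + 1) (by simp)]

section RandomCoordinates

variable {ι α : Type*}

theorem preimage_restrict_image_of_dependsOn {s : Finset ι} {E : Set (ι → α)}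
    (hE : DependsOn (· ∈ E) s) : s.restrict ⁻¹' (s.restrict '' E) = E := by
  refine Set.Subset.antisymm ?_ (Set.subset_preimage_image _ _)
  rintro ω ⟨ω', hω', hrestrict⟩
  have hagree : ∀ i ∈ (s : Set ι), ω' i = ω i := fun i hi => congrFun hrestrict ⟨i, hi⟩
  exact (hE hagree).mp hω'

variable [MeasurableSpace α] [MeasurableSingletonClass α] [Finite α]

theorem measurableSet_of_dependsOn {s : Finset ι} {E : Set (ι → α)}
    (hE : DependsOn (· ∈ E) s) : MeasurableSet E := by
  rw [← preimage_restrict_image_of_dependsOn hE]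
  exact s.measurable_restrict (Set.toFinite _).measurableSet

variable {μ : Measure (ι → α)} {c : ℝ≥0∞}

theorem measure_eq_ncard_mul_of_dependsOn
    (hμ : ∀ (s : Finset ι) (v : ι → α), μ {ω | ∀ k ∈ s, ω k = v k} = c ^ s.card)
    {s : Finset ι} {E : Set (ι → α)} (hE : DependsOn (· ∈ E) s) :
    μ E = (s.restrict '' E).ncard * c ^ s.card := by
  have hfin : (s.restrict '' E).Finite := Set.toFinite _
  have hfiber : ∀ g ∈ hfin.toFinset, μ (s.restrict ⁻¹' {g}) = c ^ s.card := by
    intro g hg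
    obtain ⟨ω₀, -, rfl⟩ := hfin.mem_toFinset.1 hg
    rw [← hμ s ω₀]
    congr 1
    ext ω
    simp [funext_iff]
  conv_lhs => rw [← preimage_restrict_image_of_dependsOn hE, ← hfin.coe_toFinset]
  rw [← sum_measure_preimage_singleton _
      fun g _ => s.measurable_restrict (measurableSet_singleton g),
    sum_congr rfl hfiber, sum_const, nsmul_eq_mul, Set.ncard_eq_toFinset_card _ hfin]

theorem measure_le_inv_mul_of_forall_exists_agree [DecidableEq ι]
    (hμ : ∀ (s : Finset ι) (v : ι → α), μ {ω | ∀ k ∈ s, ω k = v k} = c ^ s.card)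
    (hc0 : c ≠ 0) (hctop : c ≠ ⊤) {s : Finset ι} {m : ι} (hm : m ∉ s) {A D : Set (ι → α)}
    (hA : DependsOn (· ∈ A) s) (hD : DependsOn (· ∈ D) (↑(insert m s) : Set ι))
    (hAD : ∀ ω ∈ A, ∃ ω' ∈ D, ∀ i ∈ s, ω' i = ω i) :
    μ A ≤ c⁻¹ * μ D := by
  have hsub : s ⊆ insert m s := subset_insert m s
  have himage :
      s.restrict '' A ⊆ restrict₂ (π := fun _ => α) hsub '' ((insert m s).restrict '' D) := by
    rintro _ ⟨ω, hω, rfl⟩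
    obtain ⟨ω', hω', hagree⟩ := hAD ω hω
    exact ⟨_, ⟨ω', hω', rfl⟩, funext fun i => hagree i i.2⟩
  have hcard : (s.restrict '' A).ncard ≤ ((insert m s).restrict '' D).ncard :=
    (Set.ncard_le_ncard himage (Set.toFinite _)).trans (Set.ncard_image_le (Set.toFinite _))
  rw [← ENNReal.mul_le_iff_le_inv hc0 hctop, measure_eq_ncard_mul_of_dependsOn hμ hA,
    measure_eq_ncard_mul_of_dependsOn hμ hD, card_insert_of_notMem hm, pow_succ]
  calc c * ((s.restrict '' A).ncard * c ^ s.card)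
      = (s.restrict '' A).ncard * (c ^ s.card * c) := by ring
    _ ≤ ((insert m s).restrict '' D).ncard * (c ^ s.card * c) := by gcongr

end RandomCoordinates

theorem card_filter_add_le_le_floor {f : ℕ → ℝ} {ε : ℝ} (hε : 0 < ε)
    (hf : ∀ k, f (k + 1) ≤ f k) (hf0 : ∀ k, 0 ≤ f k) (K : ℕ) :
    #{k ∈ range K | f (k + 1) + ε ≤ f k} ≤ ⌊f 0 / ε⌋₊ := by
  have hdrops : ∀ K, (#{k ∈ range K | f (k + 1) + ε ≤ f k} : ℝ) * ε ≤ f 0 - f K := by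
    intro K
    induction K with
    | zero => simp
    | succ K ih =>
      rw [range_add_one, filter_insert]
      split_ifs with hK
      · rw [card_insert_of_notMem (by simp)]
        push_cast
        linarith
      · linarith [hf K]
  rw [Nat.le_floor_iff (div_nonneg (hf0 0) hε.le), le_div_iff₀ hε]
  linarith [hdrops K, hf0 K]

theorem tsum_measure_le_of_card_filter_mem_le {Ω : Type*} [MeasurableSpace Ω] {μ : Measure Ω}
    [IsProbabilityMeasure μ] {D : ℕ → Set Ω} [∀ k, DecidablePred (· ∈ D k)]
    (hD : ∀ k, MeasurableSet (D k)) {B : ℕ} (hB : ∀ ω K, #{k ∈ range K | ω ∈ D k} ≤ B) :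
    ∑' k, μ (D k) ≤ B := by
  refine ENNReal.tsum_le_of_sum_range_le fun K => ?_
  calc ∑ k ∈ range K, μ (D k)
      = ∫⁻ ω, ∑ k ∈ range K, (D k).indicator 1 ω ∂μ := by
        rw [lintegral_finsetSum _ fun k _ => measurable_one.indicator (hD k)]
        simp only [lintegral_indicator_one (hD _)]
    _ ≤ ∫⁻ _, (B : ℝ≥0∞) ∂μ := by
        refine lintegral_mono fun ω => ?_
        simp only [Set.indicator_apply, Pi.one_apply, ← natCast_card_filter]
        exact_mod_cast hB ω K
    _ = B := by simp

section PotentialDescent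

variable {α S : Type*} [MeasurableSpace α] [MeasurableSingletonClass α] [Finite α]
  {μ : Measure (ℕ → α)} [IsProbabilityMeasure μ] {c : ℝ≥0∞}
  {x : (ℕ → α) → ℕ → S} {x₀ : S} {F : α → S → S} {Φ : S → ℝ} {ε : ℝ} {G : Set S}

theorem tsum_measure_notMem_le_of_potential
    (hμ : ∀ (s : Finset ℕ) (v : ℕ → α), μ {ω | ∀ k ∈ s, ω k = v k} = c ^ s.card)
    (hc0 : c ≠ 0) (hctop : c ≠ ⊤)
    (h0 : ∀ ω, x ω 0 = x₀) (hS : ∀ ω k, x ω (k + 1) = F (ω (k + 1)) (x ω k))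
    (hε : 0 < ε) (hΦ0 : ∀ ω k, 0 ≤ Φ (x ω k)) (hΦ : ∀ ω k, Φ (x ω (k + 1)) ≤ Φ (x ω k))
    (hG : ∀ ω k, x ω k ∉ G → ∃ j, Φ (F j (x ω k)) + ε ≤ Φ (x ω k)) :
    ∑' k, μ {ω | x ω k ∉ G} ≤ c⁻¹ * ⌊Φ x₀ / ε⌋₊ := by
  classical
  have hdep := dependsOn_range_of_eq_succ h0 hS
  let D : ℕ → Set (ℕ → α) := fun k => {ω | Φ (x ω (k + 1)) + ε ≤ Φ (x ω k)}
  have hDdep : ∀ k, DependsOn (· ∈ D k) (range (k + 1 + 1)) := fun k ω ω' hagree => by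
    have hk : x ω k = x ω' k := hdep k fun i hi =>
      hagree i (by simp only [coe_range, Set.mem_Iio] at hi ⊢; omega)
    simp only [D, Set.mem_ofPred_eq, hk, show x ω (k + 1) = x ω' (k + 1) from hdep (k + 1) hagree]
  have hbad : ∀ k, μ {ω | x ω k ∉ G} ≤ c⁻¹ * μ (D k) := by
    intro k
    refine measure_le_inv_mul_of_forall_exists_agree hμ hc0 hctop notMem_range_self
      ((hdep k).preimage Gᶜ) (by rw [← range_add_one]; exact hDdep k) fun ω hω => ?_
    obtain ⟨j, hj⟩ := hG ω k hω
    have hagree : ∀ i ∈ range (k + 1), Function.update ω (k + 1) j i = ω i := fun i hi =>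
      Function.update_of_ne (by simp only [mem_range] at hi; omega) _ _
    have hk : x (Function.update ω (k + 1) j) k = x ω k := hdep k hagree
    refine ⟨Function.update ω (k + 1) j, ?_, hagree⟩
    show Φ (x _ (k + 1)) + ε ≤ Φ (x _ k)
    rwa [hS, hk, Function.update_self]
  have hdrops : ∑' k, μ (D k) ≤ ⌊Φ x₀ / ε⌋₊ :=
    tsum_measure_le_of_card_filter_mem_le (fun k => measurableSet_of_dependsOn (hDdep k))
      fun ω K => by
        have hcount := card_filter_add_le_le_floor hε (hΦ ω) (hΦ0 ω) K
        rw [h0] at hcount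
        convert hcount using 3
        exact Iff.rfl
  calc ∑' k, μ {ω | x ω k ∉ G}
      ≤ ∑' k, c⁻¹ * μ (D k) := ENNReal.tsum_le_tsum hbad
    _ = c⁻¹ * ∑' k, μ (D k) := ENNReal.tsum_mul_left
    _ ≤ c⁻¹ * ⌊Φ x₀ / ε⌋₊ := by gcongr

theorem tendsto_measure_mem_atTop_one_of_potential
    (hμ : ∀ (s : Finset ℕ) (v : ℕ → α), μ {ω | ∀ k ∈ s, ω k = v k} = c ^ s.card)
    (hc0 : c ≠ 0) (hctop : c ≠ ⊤)
    (h0 : ∀ ω, x ω 0 = x₀) (hS : ∀ ω k, x ω (k + 1) = F (ω (k + 1)) (x ω k))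
    (hε : 0 < ε) (hΦ0 : ∀ ω k, 0 ≤ Φ (x ω k)) (hΦ : ∀ ω k, Φ (x ω (k + 1)) ≤ Φ (x ω k))
    (hG : ∀ ω k, x ω k ∉ G → ∃ j, Φ (F j (x ω k)) + ε ≤ Φ (x ω k)) :
    Tendsto (fun k => μ {ω | x ω k ∈ G}) atTop (𝓝 1) := by
  have hbad : Tendsto (fun k => μ {ω | x ω k ∉ G}) atTop (𝓝 0) :=
    ENNReal.tendsto_atTop_zero_of_tsum_ne_top <| ne_top_of_le_ne_top
      (mul_ne_top (inv_ne_top.2 hc0) (natCast_ne_top _))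
      (tsum_measure_notMem_le_of_potential hμ hc0 hctop h0 hS hε hΦ0 hΦ hG)
  have hcompl : ∀ k, μ {ω | x ω k ∈ G} = 1 - μ {ω | x ω k ∉ G} := fun k => by
    have hmeas : MeasurableSet {ω | x ω k ∉ G} :=
      measurableSet_of_dependsOn ((dependsOn_range_of_eq_succ h0 hS k).preimage Gᶜ)
    rw [← prob_compl_eq_one_sub hmeas]
    simp only [Set.compl_ofPred, not_not]
  simpa only [hcompl, tsub_zero] using
    ENNReal.Tendsto.sub tendsto_const_nhds hbad (Or.inl one_ne_top)

end PotentialDescent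

theorem Real.sub_le_mul_log_div {a b : ℝ} (ha : 0 ≤ a) (hb : 0 ≤ b) (hab : b = 0 → a = 0) :
    a - b ≤ a * Real.log (a / b) := by
  rcases ha.eq_or_lt with rfl | ha
  · simpa using hb
  have hb : 0 < b := hb.lt_of_ne fun h => ha.ne' (hab h.symm)
  calc a - b = a * (1 - (a / b)⁻¹) := by field_simp
    _ ≤ a * Real.log (a / b) := by gcongr; exact Real.one_sub_inv_le_log_of_pos (by positivity)

section PrivacyGame

variable {p : X × (Fin n → X) × (∀ i, W i) → ℝ}

theorem margZW_nonneg (hp0 : ∀ t, 0 ≤ p t) (i : Fin n) (z : X) (w : W i) :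
    0 ≤ margZW p i z w :=
  sum_nonneg fun _ _ => sum_nonneg fun _ _ => sum_nonneg fun _ _ => by
    split_ifs <;> simp [hp0]

theorem sum_margZW (i : Fin n) (w : W i) : ∑ z, margZW p i z w = margW p i w := by
  classical
  unfold margZW margW
  rw [sum_comm]
  refine sum_congr rfl fun x _ => ?_
  rw [sum_comm]
  refine sum_congr rfl fun zs _ => ?_
  rw [sum_comm]
  refine sum_congr rfl fun ws _ => ?_
  simp [ite_and, sum_ite_eq]

theorem sum_margW (hp1 : ∑ x, ∑ zs : Fin n → X, ∑ ws : ∀ i, W i, p (x, zs, ws) = 1)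
    (i : Fin n) : ∑ w, margW p i w = 1 := by
  classical
  unfold margW
  rw [sum_comm, ← hp1]
  refine sum_congr rfl fun x _ => ?_
  rw [sum_comm]
  refine sum_congr rfl fun zs _ => ?_
  rw [sum_comm]
  simp [sum_ite_eq]

variable {i : Fin n} {α : Y i × X × W i → ℝ}

theorem Pyw'_nonneg (hp0 : ∀ t, 0 ≤ p t) (hα : α ∈ senderSet' X i) (y : Y i) (w : W i) :
    0 ≤ Pyw' p i α y w :=
  sum_nonneg fun z _ => mul_nonneg (hα.1 _).1 (margZW_nonneg hp0 i z w)

theorem Pyw'_le_Py' (hp0 : ∀ t, 0 ≤ p t) (hα : α ∈ senderSet' X i) (y : Y i) (w : W i) :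
    Pyw' p i α y w ≤ Py' p i α y :=
  single_le_sum (fun w _ => Pyw'_nonneg hp0 hα y w) (mem_univ w)

theorem Pyw'_le_margW (hp0 : ∀ t, 0 ≤ p t) (hα : α ∈ senderSet' X i) (y : Y i) (w : W i) :
    Pyw' p i α y w ≤ margW p i w := by
  rw [← sum_margZW]
  exact sum_le_sum fun z _ => mul_le_of_le_one_left (margZW_nonneg hp0 i z w) (hα.1 _).2

theorem sum_sum_Pyw' (hp1 : ∑ x, ∑ zs : Fin n → X, ∑ ws : ∀ i, W i, p (x, zs, ws) = 1)
    (hα : α ∈ senderSet' X i) : ∑ y, ∑ w, Pyw' p i α y w = 1 := by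
  unfold Pyw'
  rw [sum_comm, ← sum_margW hp1 i]
  refine sum_congr rfl fun w _ => ?_
  rw [sum_comm, ← sum_margZW]
  refine sum_congr rfl fun z _ => ?_
  rw [← sum_mul, hα.2 z w, one_mul]

theorem zeta'_nonneg (hp0 : ∀ t, 0 ≤ p t)
    (hp1 : ∑ x, ∑ zs : Fin n → X, ∑ ws : ∀ i, W i, p (x, zs, ws) = 1)
    (hα : α ∈ senderSet' X i) : 0 ≤ zeta' p i α := by
  have hjoint := sum_sum_Pyw' hp1 hα
  have hproduct : ∑ y, ∑ w, Py' p i α y * margW p i w = 1 := by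
    simp only [← mul_sum, sum_margW hp1, mul_one]
    exact hjoint
  calc (0 : ℝ) = ∑ y, ∑ w, (Pyw' p i α y w - Py' p i α y * margW p i w) := by
        simp only [sum_sub_distrib, hjoint, hproduct, sub_self]
    _ ≤ zeta' p i α := by
        refine sum_le_sum fun y _ => sum_le_sum fun w _ =>
          Real.sub_le_mul_log_div (Pyw'_nonneg hp0 hα y w)
            (mul_nonneg (sum_nonneg fun w _ => Pyw'_nonneg hp0 hα y w)
              (sum_margZW (p := p) i w ▸ sum_nonneg fun z _ => margZW_nonneg hp0 i z w)) ?_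
        intro hzero
        rcases mul_eq_zero.1 hzero with h | h
        · exact le_antisymm (h ▸ Pyw'_le_Py' hp0 hα y w) (Pyw'_nonneg hp0 hα y w)
        · exact le_antisymm (h ▸ Pyw'_le_margW hp0 hα y w) (Pyw'_nonneg hp0 hα y w)

end PrivacyGame

section BestResponse

abbrev StrategyProfile (X : Type*) (Y W : Fin n → Type*) : Type _ :=
  (∀ i, Y i × X × W i → ℝ) × (X × (∀ i, Y i) → ℝ)

def IsStrategyProfile (s : StrategyProfile X Y W) : Prop :=
  (∀ i, s.1 i ∈ senderSet' X i) ∧ s.2 ∈ receiverSet' X Y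

theorem Psi'_update_sub (d : X × X → ℝ) (p : X × (Fin n → X) × (∀ i, W i) → ℝ) (ρ : ℝ)
    (a : ∀ i, Y i × X × W i → ℝ) (j : Fin n) (ᾱ : Y j × X × W j → ℝ)
    (β : X × (∀ i, Y i) → ℝ) :
    Psi' d p ρ (Function.update a j ᾱ) β - Psi' d p ρ a β =
      Ucost' d p ρ j (Function.update a j ᾱ) β - Ucost' d p ρ j a β := by
  have hzeta : ∑ i, zeta' p i (Function.update a j ᾱ i) - ∑ i, zeta' p i (a i) =
      zeta' p j ᾱ - zeta' p j (a j) := by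
    rw [← sum_sub_distrib, sum_eq_single j (fun i _ hij => by simp [hij]) (by simp),
      Function.update_self]
  simp only [Psi', Ucost', Function.update_self]
  linear_combination ρ * hzeta

theorem Psi'_receiver_sub (d : X × X → ℝ) (p : X × (Fin n → X) × (∀ i, W i) → ℝ) (ρ : ℝ)
    (a : ∀ i, Y i × X × W i → ℝ) (β β' : X × (∀ i, Y i) → ℝ) :
    Psi' d p ρ a β' - Psi' d p ρ a β = Vcost' d p a β' - Vcost' d p a β := by
  simp only [Psi', Vcost']
  ring

variable {d : X × X → ℝ} {p : X × (Fin n → X) × (∀ i, W i) → ℝ} {ρ ε : ℝ}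

theorem xi'_nonneg (hp0 : ∀ t, 0 ≤ p t) (hd : ∀ t, 0 ≤ d t) {s : StrategyProfile X Y W}
    (hs : IsStrategyProfile s) : 0 ≤ xi' d p s.1 s.2 :=
  sum_nonneg fun _ _ => sum_nonneg fun _ _ => sum_nonneg fun _ _ => sum_nonneg fun _ _ =>
    sum_nonneg fun _ _ => mul_nonneg (mul_nonneg (mul_nonneg (hd _) (hs.2.1 _).1)
      (prod_nonneg fun i _ => ((hs.1 i).1 _).1)) (hp0 _)

theorem Psi'_nonneg (hp0 : ∀ t, 0 ≤ p t)
    (hp1 : ∑ x, ∑ zs : Fin n → X, ∑ ws : ∀ i, W i, p (x, zs, ws) = 1)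
    (hd : ∀ t, 0 ≤ d t) (hρ : 0 ≤ ρ) {s : StrategyProfile X Y W} (hs : IsStrategyProfile s) :
    0 ≤ Psi' d p ρ s.1 s.2 :=
  add_nonneg (xi'_nonneg hp0 hd hs)
    (mul_nonneg hρ (sum_nonneg fun i _ => zeta'_nonneg hp0 hp1 (hs.1 i)))

def IsReceiverBestResponse (d : X × X → ℝ) (p : X × (Fin n → X) × (∀ i, W i) → ℝ)
    (Sβ : (∀ i, Y i × X × W i → ℝ) → (X × (∀ i, Y i) → ℝ)) : Prop :=
  ∀ a, Sβ a ∈ receiverSet' X Y ∧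
    ∀ β' ∈ receiverSet' X Y, Vcost' d p a (Sβ a) ≤ Vcost' d p a β'

def IsSenderBestResponse (d : X × X → ℝ) (p : X × (Fin n → X) × (∀ i, W i) → ℝ) (ρ : ℝ)
    (Sa : ∀ j : Fin n, StrategyProfile X Y W → (Y j × X × W j → ℝ)) : Prop :=
  ∀ j s, Sa j s ∈ senderSet' X j ∧ ∀ ᾱ ∈ senderSet' X j,
    Ucost' d p ρ j (Function.update s.1 j (Sa j s)) s.2 ≤
      Ucost' d p ρ j (Function.update s.1 j ᾱ) s.2

/-- Player `0` is the receiver and player `j.succ` is sender `j`. -/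
def bestResponseStep (Sβ : (∀ i, Y i × X × W i → ℝ) → (X × (∀ i, Y i) → ℝ))
    (Sa : ∀ j : Fin n, StrategyProfile X Y W → (Y j × X × W j → ℝ)) (j : Fin (n + 1))
    (s : StrategyProfile X Y W) : StrategyProfile X Y W :=
  Fin.cases (s.1, Sβ s.1) (fun j => (Function.update s.1 j (Sa j s), s.2)) j

variable {Sβ : (∀ i, Y i × X × W i → ℝ) → (X × (∀ i, Y i) → ℝ)}
  {Sa : ∀ j : Fin n, StrategyProfile X Y W → (Y j × X × W j → ℝ)} {s : StrategyProfile X Y W}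

theorem isStrategyProfile_bestResponseStep (hs : IsStrategyProfile s)
    (hSβ : IsReceiverBestResponse d p Sβ) (hSa : IsSenderBestResponse d p ρ Sa)
    (j : Fin (n + 1)) : IsStrategyProfile (bestResponseStep Sβ Sa j s) := by
  cases j using Fin.cases with
  | zero => exact ⟨hs.1, (hSβ s.1).1⟩
  | succ j =>
    refine ⟨fun i => ?_, hs.2⟩
    rcases eq_or_ne i j with rfl | hij
    · simpa [bestResponseStep] using (hSa i s).1
    · simpa [bestResponseStep, hij] using hs.1 i

theorem Psi'_bestResponseStep_zero_le (hSβ : IsReceiverBestResponse d p Sβ) {β'}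
    (hβ' : β' ∈ receiverSet' X Y) :
    Psi' d p ρ (bestResponseStep Sβ Sa 0 s).1 (bestResponseStep Sβ Sa 0 s).2 ≤
      Psi' d p ρ s.1 β' := by
  have := Psi'_receiver_sub d p ρ s.1 β' (Sβ s.1)
  simp only [bestResponseStep, Fin.cases_zero]
  linarith [(hSβ s.1).2 β' hβ']

theorem Psi'_bestResponseStep_succ_le (hSa : IsSenderBestResponse d p ρ Sa) (j : Fin n) {ᾱ}
    (hᾱ : ᾱ ∈ senderSet' X j) :
    Psi' d p ρ (bestResponseStep Sβ Sa j.succ s).1 (bestResponseStep Sβ Sa j.succ s).2 ≤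
      Psi' d p ρ (Function.update s.1 j ᾱ) s.2 := by
  have hbr := Psi'_update_sub d p ρ s.1 j (Sa j s) s.2
  have hdev := Psi'_update_sub d p ρ s.1 j ᾱ s.2
  simp only [bestResponseStep, Fin.cases_succ]
  linarith [(hSa j s).2 ᾱ hᾱ]

theorem Psi'_bestResponseStep_le (hSβ : IsReceiverBestResponse d p Sβ)
    (hSa : IsSenderBestResponse d p ρ Sa) (hs : IsStrategyProfile s) (j : Fin (n + 1)) :
    Psi' d p ρ (bestResponseStep Sβ Sa j s).1 (bestResponseStep Sβ Sa j s).2 ≤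
      Psi' d p ρ s.1 s.2 := by
  cases j using Fin.cases with
  | zero => exact Psi'_bestResponseStep_zero_le hSβ hs.2
  | succ j =>
    simpa only [Function.update_eq_self] using
      Psi'_bestResponseStep_succ_le (Sβ := Sβ) (s := s) hSa j (hs.1 j)

theorem exists_Psi'_bestResponseStep_add_le (hSβ : IsReceiverBestResponse d p Sβ)
    (hSa : IsSenderBestResponse d p ρ Sa) (hs : IsStrategyProfile s)
    (hnash : ¬ IsEpsNash' d p ρ ε s.1 s.2) :
    ∃ j, Psi' d p ρ (bestResponseStep Sβ Sa j s).1 (bestResponseStep Sβ Sa j s).2 + ε ≤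
      Psi' d p ρ s.1 s.2 := by
  by_cases hsender : ∃ j, ∃ ᾱ ∈ senderSet' X j,
      Ucost' d p ρ j (Function.update s.1 j ᾱ) s.2 + ε < Ucost' d p ρ j s.1 s.2
  · obtain ⟨j, ᾱ, hᾱ, hgain⟩ := hsender
    have := Psi'_update_sub d p ρ s.1 j ᾱ s.2
    exact ⟨j.succ, by linarith [Psi'_bestResponseStep_succ_le (Sβ := Sβ) (s := s) hSa j hᾱ]⟩
  · obtain ⟨β', hβ', hgain⟩ : ∃ β' ∈ receiverSet' X Y,
        Vcost' d p s.1 β' + ε < Vcost' d p s.1 s.2 := by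
      by_contra hreceiver
      push Not at hsender hreceiver
      exact hnash ⟨hs.1, hs.2, hsender, hreceiver⟩
    have := Psi'_receiver_sub d p ρ s.1 s.2 β'
    exact ⟨0, by linarith [Psi'_bestResponseStep_zero_le (Sa := Sa) (s := s) (ρ := ρ) hSβ hβ']⟩

end BestResponse

open MeasureTheory Filter ENNReal in
theorem random_best_response_converges_in_probability_general
    (p : X × (Fin n → X) × (∀ i, W i) → ℝ) (hp0 : ∀ t, 0 ≤ p t)
    (hp1 : ∑ x, ∑ zs : Fin n → X, ∑ ws : ∀ i, W i, p (x, zs, ws) = 1)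
    (d : X × X → ℝ) (hd : ∀ t, 0 ≤ d t)
    (ρ : ℝ) (hρ : 0 ≤ ρ) (ε : ℝ) (hε : 0 < ε)
    -- the receiver's best-response map
    (Sβ : (∀ i, Y i × X × W i → ℝ) → (X × (∀ i, Y i) → ℝ))
    (hSβ : ∀ a, Sβ a ∈ receiverSet' X Y ∧
      ∀ β' ∈ receiverSet' X Y, Vcost' d p a (Sβ a) ≤ Vcost' d p a β')
    -- the senders' best-response maps
    (Sa : ∀ j : Fin n,
      ((∀ i, Y i × X × W i → ℝ) × (X × (∀ i, Y i) → ℝ)) → (Y j × X × W j → ℝ))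
    (hSa : ∀ (j : Fin n) (s : (∀ i, Y i × X × W i → ℝ) × (X × (∀ i, Y i) → ℝ)),
      Sa j s ∈ senderSet' X j ∧
      ∀ ᾱ ∈ senderSet' X j,
        Ucost' d p ρ j (Function.update s.1 j (Sa j s)) s.2 ≤
          Ucost' d p ρ j (Function.update s.1 j ᾱ) s.2)
    -- the initial state, lying in `∏ᵢ A'_i × B'`
    (s0 : (∀ i, Y i × X × W i → ℝ) × (X × (∀ i, Y i) → ℝ))
    (hs0 : (∀ i, s0.1 i ∈ senderSet' X i) ∧ s0.2 ∈ receiverSet' X Y)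
    -- the random trajectory: at step `k ≥ 1`, player `ω k` updates
    (traj : (ℕ → Fin (n + 1)) →
      ℕ → (∀ i, Y i × X × W i → ℝ) × (X × (∀ i, Y i) → ℝ))
    (htraj0 : ∀ ω, traj ω 0 = s0)
    (htrajS : ∀ ω k, traj ω (k + 1) =
      Fin.cases
        (motive := fun _ => (∀ i, Y i × X × W i → ℝ) × (X × (∀ i, Y i) → ℝ))
        ((traj ω k).1, Sβ (traj ω k).1)
        (fun j => (Function.update (traj ω k).1 j (Sa j (traj ω k)), (traj ω k).2))
        (ω (k + 1)))
    -- `μ` is the infinite product of the uniform measure on `{0, 1, …, n}`,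
    -- characterized by its values on cylinder sets
    (μ : Measure (ℕ → Fin (n + 1))) (hμprob : IsProbabilityMeasure μ)
    (hμ : ∀ (s : Finset ℕ) (v : ℕ → Fin (n + 1)),
      μ {ω | ∀ k ∈ s, ω k = v k} = (((n : ℝ≥0∞) + 1)⁻¹) ^ s.card) :
    Tendsto (fun k => μ {ω | IsEpsNash' d p ρ ε (traj ω k).1 (traj ω k).2})
      atTop (nhds 1) := by
  have hstep : ∀ ω k, traj ω (k + 1) = bestResponseStep Sβ Sa (ω (k + 1)) (traj ω k) := htrajS
  have hprofile : ∀ ω k, IsStrategyProfile (traj ω k) := fun ω k => by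
    induction k with
    | zero => rw [htraj0]; exact hs0
    | succ k ih => rw [hstep]; exact isStrategyProfile_bestResponseStep ih hSβ hSa _
  exact tendsto_measure_mem_atTop_one_of_potential (x := traj) hμ (by simp) (by simp) htraj0 hstep
    hε (Φ := fun s => Psi' d p ρ s.1 s.2) (G := {s | IsEpsNash' d p ρ ε s.1 s.2})
    (fun ω k => Psi'_nonneg hp0 hp1 hd hρ (hprofile ω k))
    (fun ω k => by rw [hstep]; exact Psi'_bestResponseStep_le hSβ hSa (hprofile ω k) _)
    (fun ω k => exists_Psi'_bestResponseStep_add_le hSβ hSa (hprofile ω k))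

open MeasureTheory Filter ENNReal in
/-- random-player best-response dynamics (Algorithm 3).  At each step a
player from `{0, 1, …, n}` (`0` = receiver, `j ≥ 1` = sender `j`) is chosen uniformly
and independently at random and best-responds.  Under the infinite product `μ` of the
uniform measure on `{0, 1, …, n}` — characterized by its values on cylinder sets —
the probability that the state at time `k` is an `ε`-Nash equilibrium tends to `1`. -/
theorem random_best_response_converges_in_probability
    [Nonempty X] [∀ i, Nonempty (Y i)] [∀ i, Nonempty (W i)] (hn : 1 ≤ n)
    (p : X × (Fin n → X) × (∀ i, W i) → ℝ) (hp0 : ∀ t, 0 ≤ p t)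
    (hp1 : ∑ x, ∑ zs : Fin n → X, ∑ ws : ∀ i, W i, p (x, zs, ws) = 1)
    (d : X × X → ℝ) (hd : ∀ t, 0 ≤ d t)
    (ρ : ℝ) (hρ : 0 ≤ ρ) (ε : ℝ) (hε : 0 < ε)
    -- the receiver's best-response map
    (Sβ : (∀ i, Y i × X × W i → ℝ) → (X × (∀ i, Y i) → ℝ))
    (hSβ : ∀ a, Sβ a ∈ receiverSet' X Y ∧
      ∀ β' ∈ receiverSet' X Y, Vcost' d p a (Sβ a) ≤ Vcost' d p a β')
    -- the senders' best-response maps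
    (Sa : ∀ j : Fin n,
      ((∀ i, Y i × X × W i → ℝ) × (X × (∀ i, Y i) → ℝ)) → (Y j × X × W j → ℝ))
    (hSa : ∀ (j : Fin n) (s : (∀ i, Y i × X × W i → ℝ) × (X × (∀ i, Y i) → ℝ)),
      Sa j s ∈ senderSet' X j ∧
      ∀ ᾱ ∈ senderSet' X j,
        Ucost' d p ρ j (Function.update s.1 j (Sa j s)) s.2 ≤
          Ucost' d p ρ j (Function.update s.1 j ᾱ) s.2)
    -- the initial state, lying in `∏ᵢ A'_i × B'`
    (s0 : (∀ i, Y i × X × W i → ℝ) × (X × (∀ i, Y i) → ℝ))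
    (hs0 : (∀ i, s0.1 i ∈ senderSet' X i) ∧ s0.2 ∈ receiverSet' X Y)
    -- the random trajectory: at step `k ≥ 1`, player `ω k` updates
    (traj : (ℕ → Fin (n + 1)) →
      ℕ → (∀ i, Y i × X × W i → ℝ) × (X × (∀ i, Y i) → ℝ))
    (htraj0 : ∀ ω, traj ω 0 = s0)
    (htrajS : ∀ ω k, traj ω (k + 1) =
      Fin.cases
        (motive := fun _ => (∀ i, Y i × X × W i → ℝ) × (X × (∀ i, Y i) → ℝ))
        ((traj ω k).1, Sβ (traj ω k).1)
        (fun j => (Function.update (traj ω k).1 j (Sa j (traj ω k)), (traj ω k).2))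
        (ω (k + 1)))
    -- `μ` is the infinite product of the uniform measure on `{0, 1, …, n}`,
    -- characterized by its values on cylinder sets
    (μ : Measure (ℕ → Fin (n + 1))) (hμprob : IsProbabilityMeasure μ)
    (hμ : ∀ (s : Finset ℕ) (v : ℕ → Fin (n + 1)),
      μ {ω | ∀ k ∈ s, ω k = v k} = (((n : ℝ≥0∞) + 1)⁻¹) ^ s.card) :
    Tendsto (fun k => μ {ω | IsEpsNash' d p ρ ε (traj ω k).1 (traj ω k).2})
      atTop (nhds 1) :=
  random_best_response_converges_in_probability_general p hp0 hp1 d hd ρ hρ ε hε Sβ hSβ Sa hSa s0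
    hs0 traj htraj0 htrajS μ hμprob hμ
end
end
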